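/- Let F be a set of unary FDs over schema R, let ?A be an uncertain attribute that is not a sink, let Y = (?A)⁺_F ∖ {?A} (nonempty), and suppose no attribute of Y functionally determines ?A under F. Given a CIR U₀ over {?A, B} (with ?A uncertain, B certain), construct U over R by: U[i][?A] = U₀[i][?A]; U[i][C] = U₀[i][B] for every C ∈ Y; and U[i][C] = i (a fresh identifier value) for every C ∈ R ∖ (Y ∪ {?A}). Then samples of U₀ are in probability-preserving bijection with samples of U, and a sample r₀ of U₀ satisfies ?A → B if and only if its extension r₀⁺ satisfies F. Consequently, Pr_{U₀}(?A → B) = Pr_U(F). -/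

import Mathlib

/-!
Inside the closure `K = (?A)⁺` the extension has the `?A` column followed by copies of the `B`
column, and outside `K` it holds tuple identifiers, so an FD of `F` can only be violated by two
tuples agreeing on a left-hand side in `K`. Agreement on `?A` forces agreement on `B`
(when `?A → B` holds), hence on all of `K`; agreement on some `C ∈ Y` is agreement on `B`, and
since `C` does not determine `?A` the right-hand side is again in `Y`. Conversely, if the
extension satisfies `F`, agreement on `?A` propagates through the closure to the nonempty `Y`,
i.e. to `B`. Outside `?A` the cells of `U` are point masses, so extending is a
probability-preserving bijection onto the samples of positive probability.
-/

/-- The closure of a set `S` of attributes under a set `F` of unary FDs: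
`b ∈ UCl F S` iff `F` implies `S → b`. -/
def UCl {Att : Type} (F : Finset (Att × Att)) (S : Set Att) : Set Att :=
  ⋂₀ {T : Set Att | S ⊆ T ∧ ∀ fd ∈ F, fd.1 ∈ T → fd.2 ∈ T}

section Closure

variable {Att : Type} {F : Finset (Att × Att)} {S : Set Att}

lemma subset_UCl : S ⊆ UCl F S :=
  fun _ hx _ hT => hT.1 hx

lemma snd_mem_UCl {fd : Att × Att} (hfd : fd ∈ F) (h : fd.1 ∈ UCl F S) : fd.2 ∈ UCl F S :=
  fun T hT => hT.2 fd hfd (h T hT)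

lemma snd_mem_UCl_singleton_fst {fd : Att × Att} (hfd : fd ∈ F) : fd.2 ∈ UCl F {fd.1} :=
  snd_mem_UCl hfd (subset_UCl rfl)

lemma UCl_subset {T : Set Att} (hST : S ⊆ T) (hT : ∀ fd ∈ F, fd.1 ∈ T → fd.2 ∈ T) :
    UCl F S ⊆ T :=
  fun _ hx => hx T ⟨hST, hT⟩

end Closure

def SatisfiesFDs {Att W ι : Type} (F : Finset (Att × Att)) (s : ι → Att → W) : Prop :=
  ∀ fd ∈ F, ∀ i j : ι, s i fd.1 = s j fd.1 → s i fd.2 = s j fd.2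

lemma eqOn_UCl_of_satisfiesFDs {Att W ι : Type} {F : Finset (Att × Att)} {s : ι → Att → W}
    (hs : SatisfiesFDs F s) {S : Set Att} {i j : ι} (hS : ∀ C ∈ S, s i C = s j C) :
    ∀ C ∈ UCl F S, s i C = s j C :=
  UCl_subset (T := {C | s i C = s j C}) hS fun fd hfd => hs fd hfd i j

open Classical in
/-- The extension `r₀⁺` of a sample `a` of `U₀`, for `K = (?A)⁺_F`. -/
noncomputable def extendSample {Att V ι : Type} (attA : Att) (K : Set Att) (Bval : ι → V)
    (a : ι → V) (i : ι) (C : Att) : V ⊕ ι :=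
  if C = attA then Sum.inl (a i) else if C ∈ K then Sum.inl (Bval i) else Sum.inr i

namespace extendSample

variable {Att V ι : Type} {attA C : Att} {K : Set Att} {Bval : ι → V} {a : ι → V} {i : ι}

lemma apply_self : extendSample attA K Bval a i attA = Sum.inl (a i) := by
  simp [extendSample]

lemma apply_of_mem (hCA : C ≠ attA) (hC : C ∈ K) :
    extendSample attA K Bval a i C = Sum.inl (Bval i) := by
  simp [extendSample, hCA, hC]

lemma apply_of_notMem (hA : attA ∈ K) (hC : C ∉ K) :
    extendSample attA K Bval a i C = Sum.inr i := by
  have hCA : C ≠ attA := by rintro rfl; exact hC hA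
  simp [extendSample, hCA, hC]

lemma injective : Function.Injective (extendSample (ι := ι) attA K Bval) := by
  intro a a' h
  funext i
  simpa [apply_self] using congrFun (congrFun h i) attA

end extendSample

section Reduction

open extendSample

variable {Att V ι : Type} {attA : Att} {F : Finset (Att × Att)} {Bval : ι → V} {a : ι → V}

lemma satisfiesFDs_extendSample
    (hnd : ∀ C : Att, C ∈ UCl F {attA} → C ≠ attA → attA ∉ UCl F {C})
    (hcons : ∀ i j : ι, a i = a j → Bval i = Bval j) :
    SatisfiesFDs F (extendSample attA (UCl F {attA}) Bval a) := by
  have hA : attA ∈ UCl F {attA} := subset_UCl rfl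
  intro fd hfd i j h1
  by_cases hC : fd.1 ∈ UCl F {attA}
  swap
  · rw [apply_of_notMem hA hC, apply_of_notMem hA hC, Sum.inr.injEq] at h1
    rw [h1]
  have hD : fd.2 ∈ UCl F {attA} := snd_mem_UCl hfd hC
  by_cases hDA : fd.2 = attA
  · obtain rfl : fd.1 = attA := by
      by_contra hCA
      exact hnd fd.1 hC hCA (hDA ▸ snd_mem_UCl_singleton_fst hfd)
    rwa [hDA]
  have hB : Bval i = Bval j := by
    by_cases hCA : fd.1 = attA
    · rw [hCA, apply_self, apply_self, Sum.inl.injEq] at h1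
      exact hcons i j h1
    · rwa [apply_of_mem hCA hC, apply_of_mem hCA hC, Sum.inl.injEq] at h1
  rw [apply_of_mem hDA hD, apply_of_mem hDA hD, hB]

lemma consistent_of_satisfiesFDs_extendSample (hns : UCl F {attA} ≠ {attA})
    (hsat : SatisfiesFDs F (extendSample attA (UCl F {attA}) Bval a)) :
    ∀ i j : ι, a i = a j → Bval i = Bval j := by
  intro i j hij
  obtain ⟨C, hC, hCA⟩ : ∃ C ∈ UCl F {attA}, C ≠ attA := by
    by_contra! h
    exact hns (Set.Subset.antisymm h subset_UCl)
  have hagree := eqOn_UCl_of_satisfiesFDs hsat (i := i) (j := j)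
    (by rintro _ rfl; rw [apply_self, apply_self, hij]) C hC
  rwa [apply_of_mem hCA hC, apply_of_mem hCA hC, Sum.inl.injEq] at hagree

end Reduction

section Probability

open Classical extendSample

variable {Att V ι : Type} [Fintype Att] [Fintype ι] {attA : Att} {K : Set Att} {Bval : ι → V}
  {p : ι → V → ℝ} {q : ι → Att → (V ⊕ ι) → ℝ}

lemma prod_prod_extendSample (hA : attA ∈ K)
    (hqA : ∀ (i : ι) (v : V), q i attA (Sum.inl v) = p i v)
    (hqY : ∀ (i : ι) (C : Att), C ≠ attA → C ∈ K →
      ∀ w : V ⊕ ι, q i C w = if w = Sum.inl (Bval i) then 1 else 0)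
    (hqO : ∀ (i : ι) (C : Att), C ∉ K → ∀ w : V ⊕ ι, q i C w = if w = Sum.inr i then 1 else 0)
    (a : ι → V) :
    ∏ i, ∏ C, q i C (extendSample attA K Bval a i C) = ∏ i, p i (a i) := by
  refine Finset.prod_congr rfl fun i _ => ?_
  rw [Finset.prod_eq_single_of_mem attA (Finset.mem_univ _), apply_self, hqA]
  intro C _ hCA
  by_cases hC : C ∈ K
  · rw [apply_of_mem hCA hC, hqY i C hCA hC, if_pos rfl]
  · rw [apply_of_notMem hA hC, hqO i C hC, if_pos rfl]

lemma exists_extendSample_eq_of_prod_prod_ne_zero (hA : attA ∈ K)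
    (hqA' : ∀ (i t : ι), q i attA (Sum.inr t) = 0)
    (hqY : ∀ (i : ι) (C : Att), C ≠ attA → C ∈ K →
      ∀ w : V ⊕ ι, q i C w = if w = Sum.inl (Bval i) then 1 else 0)
    (hqO : ∀ (i : ι) (C : Att), C ∉ K → ∀ w : V ⊕ ι, q i C w = if w = Sum.inr i then 1 else 0)
    {s : ι → Att → V ⊕ ι} (hs : ∏ i, ∏ C, q i C (s i C) ≠ 0) :
    ∃ a, extendSample attA K Bval a = s := by
  have hne : ∀ i C, q i C (s i C) ≠ 0 := fun i C h0 =>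
    hs (Finset.prod_eq_zero (Finset.mem_univ i) (Finset.prod_eq_zero (Finset.mem_univ C) h0))
  have hAcell : ∀ i, ∃ v, s i attA = Sum.inl v := fun i => by
    rcases h : s i attA with v | t
    · exact ⟨v, rfl⟩
    · exact absurd (h ▸ hqA' i t) (hne i attA)
  choose a ha using hAcell
  refine ⟨a, funext fun i => funext fun C => ?_⟩
  by_cases hCA : C = attA
  · rw [hCA, apply_self, ha]
  by_cases hC : C ∈ K
  · rw [apply_of_mem hCA hC]
    by_contra h
    exact hne i C (by rw [hqY i C hCA hC, if_neg (Ne.symm h)])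
  · rw [apply_of_notMem hA hC]
    by_contra h
    exact hne i C (by rw [hqO i C hC, if_neg (Ne.symm h)])

end Probability

open Classical in
theorem stmt16_general {Att V ι : Type} [Fintype Att] [Fintype ι] [Fintype V]
    (attA : Att)
    (F : Finset (Att × Att))
    (hns : UCl F {attA} ≠ {attA})
    (hnd : ∀ C : Att, C ∈ UCl F {attA} → C ≠ attA → attA ∉ UCl F {C})
    (p : ι → V → ℝ) (Bval : ι → V)
    (q : ι → Att → (V ⊕ ι) → ℝ)
    (hqA : ∀ (i : ι) (v : V), q i attA (Sum.inl v) = p i v)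
    (hqA' : ∀ (i t : ι), q i attA (Sum.inr t) = 0)
    (hqY : ∀ (i : ι) (C : Att), C ≠ attA → C ∈ UCl F {attA} →
      ∀ w : V ⊕ ι, q i C w = if w = Sum.inl (Bval i) then 1 else 0)
    (hqO : ∀ (i : ι) (C : Att), C ∉ UCl F {attA} →
      ∀ w : V ⊕ ι, q i C w = if w = Sum.inr i then 1 else 0) :
    let ext : (ι → V) → ι → Att → (V ⊕ ι) := fun a i C =>
      if C = attA then Sum.inl (a i)
      else if C ∈ UCl F {attA} then Sum.inl (Bval i) else Sum.inr i
    -- per-sample: satisfaction transfers, probabilities agree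
    (∀ a : ι → V,
      ((∀ i j : ι, a i = a j → Bval i = Bval j)
        ↔ ∀ fd ∈ F, ∀ i j : ι,
            ext a i fd.1 = ext a j fd.1 → ext a i fd.2 = ext a j fd.2)
      ∧ (∏ i : ι, ∏ C : Att, q i C (ext a i C)) = ∏ i : ι, p i (a i))
    -- consequently the probabilities of consistency coincide
    ∧ (∑ a ∈ Finset.univ.filter
          (fun a : ι → V => ∀ i j : ι, a i = a j → Bval i = Bval j),
        ∏ i : ι, p i (a i))
      = ∑ s ∈ Finset.univ.filter (fun s : ι → Att → (V ⊕ ι) =>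
          ∀ fd ∈ F, ∀ i j : ι, s i fd.1 = s j fd.1 → s i fd.2 = s j fd.2),
        ∏ i : ι, ∏ C : Att, q i C (s i C) := by
  intro ext
  have hA : attA ∈ UCl F {attA} := subset_UCl rfl
  have hsat (a : ι → V) :
      (∀ i j : ι, a i = a j → Bval i = Bval j) ↔ SatisfiesFDs F (ext a) :=
    ⟨satisfiesFDs_extendSample hnd, consistent_of_satisfiesFDs_extendSample hns⟩
  have hprob (a : ι → V) : ∏ i, ∏ C, q i C (ext a i C) = ∏ i, p i (a i) :=
    prod_prod_extendSample hA hqA hqY hqO a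
  refine ⟨fun a => ⟨hsat a, hprob a⟩, ?_⟩
  refine Finset.sum_of_injOn ext extendSample.injective.injOn ?_ ?_ fun a _ => (hprob a).symm
  · intro a ha
    simp only [Finset.coe_filter, Finset.mem_univ, true_and, Set.mem_ofPred_eq] at ha ⊢
    exact (hsat a).1 ha
  · intro s hs hnot
    by_contra h
    obtain ⟨a, rfl⟩ := exists_extendSample_eq_of_prod_prod_ne_zero hA hqA' hqY hqO h
    refine hnot ⟨a, ?_, rfl⟩
    simp only [Finset.coe_filter, Finset.mem_univ, true_and, Set.mem_ofPred_eq]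
    exact (hsat a).2 (Finset.mem_filter.1 hs).2

open Classical in
/-- Let `F` be a set of unary FDs over `R`, `?A` an uncertain non-sink
attribute, `Y = (?A)⁺_F ∖ {?A}` its (nonempty) strict closure, and suppose no attribute of `Y`
determines `?A`.  From a CIR `U₀` over `{?A, B}` (cell distributions `p`, certain `B`-values
`Bval`), build `U` over `R` by keeping the `?A` column, copying the `B` column into every
attribute of `Y`, and putting the fresh identifier value `i` everywhere else (cells `q`,
deterministic outside `?A`).  Then every sample `a` of `U₀` extends uniquely (and
probability-preservingly) to a sample of `U`, the extension satisfies `F` iff `a` satisfies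
`?A → B`, and consequently `Pr_{U₀}(?A → B) = Pr_U(F)`. -/
theorem stmt16 {Att V ι : Type} [Fintype Att] [Fintype ι] [Fintype V]
    (attA : Att)
    (F : Finset (Att × Att))
    (hns : UCl F {attA} ≠ {attA})
    (hnd : ∀ C : Att, C ∈ UCl F {attA} → C ≠ attA → attA ∉ UCl F {C})
    (p : ι → V → ℝ) (Bval : ι → V)
    (hnn : ∀ i v, 0 ≤ p i v) (hsum : ∀ i, ∑ v : V, p i v = 1)
    (q : ι → Att → (V ⊕ ι) → ℝ)
    (hqA : ∀ (i : ι) (v : V), q i attA (Sum.inl v) = p i v)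
    (hqA' : ∀ (i t : ι), q i attA (Sum.inr t) = 0)
    (hqY : ∀ (i : ι) (C : Att), C ≠ attA → C ∈ UCl F {attA} →
      ∀ w : V ⊕ ι, q i C w = if w = Sum.inl (Bval i) then 1 else 0)
    (hqO : ∀ (i : ι) (C : Att), C ∉ UCl F {attA} →
      ∀ w : V ⊕ ι, q i C w = if w = Sum.inr i then 1 else 0) :
    let ext : (ι → V) → ι → Att → (V ⊕ ι) := fun a i C =>
      if C = attA then Sum.inl (a i)
      else if C ∈ UCl F {attA} then Sum.inl (Bval i) else Sum.inr i
    -- per-sample: satisfaction transfers, probabilities agree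
    (∀ a : ι → V,
      ((∀ i j : ι, a i = a j → Bval i = Bval j)
        ↔ ∀ fd ∈ F, ∀ i j : ι,
            ext a i fd.1 = ext a j fd.1 → ext a i fd.2 = ext a j fd.2)
      ∧ (∏ i : ι, ∏ C : Att, q i C (ext a i C)) = ∏ i : ι, p i (a i))
    -- consequently the probabilities of consistency coincide
    ∧ (∑ a ∈ Finset.univ.filter
          (fun a : ι → V => ∀ i j : ι, a i = a j → Bval i = Bval j),
        ∏ i : ι, p i (a i))
      = ∑ s ∈ Finset.univ.filter (fun s : ι → Att → (V ⊕ ι) =>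
          ∀ fd ∈ F, ∀ i j : ι, s i fd.1 = s j fd.1 → s i fd.2 = s j fd.2),
        ∏ i : ι, ∏ C : Att, q i C (s i C) :=
  stmt16_general attA F hns hnd p Bval q hqA hqA' hqY hqO
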